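/- arXiv:1604.05678 — 2 statements merged into one kernel-verified Lean document; each statement's English description precedes it below -/
import Mathlib

section
/- Let L be a Lie algebra over a field F and let b_1, …, b_n ∈ L be such that the operators ad(b_1), …, ad(b_n) pairwise commute and each b_i is a sandwich of L. Let U_k = U_k(ad(b_1), …, ad(b_n)) and suppose U_k = 0 for all k ≥ 3. Then: (1) for every s ≥ 1, all y_1, …, y_s ∈ L and all nonnegative integers i_1, …, i_s with i_1 + ⋯ + i_s ≥ s + 2, one has ((…((y_1 U_{i_1})·ad(y_2)) U_{i_2} …)·ad(y_s)) U_{i_s} = 0; (2) for every s ≥ 0, all y_1, …, y_s ∈ L and all nonnegative integers i_1, …, i_{s+1} with i_1 + ⋯ + i_{s+1} ≥ s + 3, the operator U_{i_1} · ad(y_1) · U_{i_2} · … · ad(y_s) · U_{i_{s+1}} is zero on L; (3) if i_1 + ⋯ + i_{s+1} ≥ s + 2 and there exists 1 ≤ k ≤ s − 2 with i_{k+1} = i_{k+2} = 0, then the operator U_{i_1} · ad(y_1) · … · ad(y_s) · U_{i_{s+1}} is zero on L. -/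
/-!
Write `U_k` for `U_k(ad b_1, …, ad b_n)`. As the `ad b_j` commute and square to zero, `U_k` is the
sum of the order-independent products over `k`-subsets, so `U_a U_c = C(a + c, a) U_{a + c}`; as they are moreover
derivations, expanding each product by the Leibniz rule gives
`U_m ad y = ∑_{a ≤ m} ad (U_a y) U_{m - a}`, the sandwich identities killing every term in which
some `ad b_j` acts twice. With `U_3 = U_4 = 0` these identities give `U_2 ad y U_2 = 0` and
`U_1 ad y U_2 = U_2 ad y U_1`. The second one pushes a `U_2` through a run of `U_1`s, so an
operator word `U_{i_0} ad y_0 ⋯ U_{i_s}` vanishes as soon as it contains some `i_j ≥ 3` or two `2`s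
separated only by `1`s. In any other word there is a `0` between any two `2`s, so
`∑ i_j ≤ s + 2`, and `∑ i_j ≤ s + 1` if moreover two adjacent indices vanish. The elements of (1)
are, up to sign, such words applied to `y_1`.
-/

/-- The divided-power operator `U_k(d_1, …, d_n)`: the sum over all `k`-element subsets
`{i_1 < … < i_k}` of `{1, …, n}` of the compositions `d_{i_1} ∘ ⋯ ∘ d_{i_k}`.
`U_0` is the identity and `U_k = 0` for `k > n`. -/
noncomputable def Uop {F : Type*} {A : Type*} [Field F] [AddCommGroup A] [Module F A]
    {n : ℕ} (d : Fin n → Module.End F A) (k : ℕ) : Module.End F A :=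
  ∑ S ∈ Finset.powersetCard k (Finset.univ : Finset (Fin n)),
    ((S.sort (· ≤ ·)).map d).prod

/-- `b` is a sandwich of the Lie algebra `L`. -/
def IsSandwich (F : Type*) {L : Type*} [Field F] [LieRing L] [LieAlgebra F L] (b : L) : Prop :=
  LieAlgebra.ad F L b * LieAlgebra.ad F L b = 0 ∧
    ∀ c : L, LieAlgebra.ad F L b * LieAlgebra.ad F L c * LieAlgebra.ad F L b = 0

/-- The element `((…((y_0 U_{i_0})·ad(y_1)) U_{i_1} …)·ad(y_s)) U_{i_s}` (0-based indices). -/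
noncomputable def chainEl {F : Type*} {L : Type*} [Field F] [LieRing L] [LieAlgebra F L]
    {n : ℕ} (d : Fin n → Module.End F L) (y : ℕ → L) (i : ℕ → ℕ) : ℕ → L
  | 0 => Uop d (i 0) (y 0)
  | j + 1 => Uop d (i (j + 1)) ⁅chainEl d y i j, y (j + 1)⁆

/-- The operator `U_{i_0} · ad(y_0) · U_{i_1} · … · ad(y_{s-1}) · U_{i_s}`, applied from
left to right (0-based indices). -/
noncomputable def opChain {F : Type*} {L : Type*} [Field F] [LieRing L] [LieAlgebra F L]
    {n : ℕ} (d : Fin n → Module.End F L) (y : ℕ → L) (i : ℕ → ℕ) : ℕ → Module.End F L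
  | 0 => Uop d (i 0)
  | j + 1 => Uop d (i (j + 1)) * LieAlgebra.ad F L (y j) * opChain d y i j

open Finset LieAlgebra

section SubsetProd

variable {M ι : Type*} {d : ι → M}

noncomputable def subsetProd [Monoid M] (hc : ∀ i j, Commute (d i) (d j)) (S : Finset ι) : M :=
  S.noncommProd d fun i _ j _ _ => hc i j

section Monoid

variable [Monoid M] (hc : ∀ i j, Commute (d i) (d j))

@[simp]
theorem subsetProd_empty : subsetProd hc ∅ = 1 :=
  noncommProd_empty _ _

theorem commute_subsetProd (j : ι) (S : Finset ι) : Commute (d j) (subsetProd hc S) :=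
  noncommProd_commute _ _ _ _ fun k _ => hc j k

variable [DecidableEq ι]

theorem subsetProd_insert {j : ι} {S : Finset ι} (h : j ∉ S) :
    subsetProd hc (insert j S) = d j * subsetProd hc S :=
  noncommProd_insert_of_notMem _ _ _ _ h

theorem subsetProd_eq_mul_erase {j : ι} {S : Finset ι} (h : j ∈ S) :
    subsetProd hc S = d j * subsetProd hc (S.erase j) :=
  (mul_noncommProd_erase S h d _).symm

theorem subsetProd_union {S T : Finset ι} (h : Disjoint S T) :
    subsetProd hc (S ∪ T) = subsetProd hc S * subsetProd hc T :=
  noncommProd_union_of_disjoint h _ _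

end Monoid

theorem subsetProd_mul_subsetProd_of_not_disjoint [DecidableEq ι] [MonoidWithZero M]
    (hc : ∀ i j, Commute (d i) (d j)) (hsq : ∀ j, d j * d j = 0) {S T : Finset ι}
    (h : ¬ Disjoint S T) : subsetProd hc S * subsetProd hc T = 0 := by
  obtain ⟨j, hjS, hjT⟩ := not_disjoint_iff.mp h
  rw [subsetProd_eq_mul_erase hc hjS, subsetProd_eq_mul_erase hc hjT, mul_assoc,
    (commute_subsetProd hc j _).symm.left_comm, ← mul_assoc, hsq, zero_mul]

end SubsetProd

-- Any pair `(T, V)` of disjoint sets is `(T, S \ T)` for exactly one `S ⊇ T`, namely `T ∪ V`.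
theorem sum_powersetCard_sum_powersetCard_eq_sum_sdiff {ι M : Type*} [Fintype ι]
    [DecidableEq ι] [AddCommMonoid M] (g : Finset ι → Finset ι → M)
    (hg : ∀ T V, ¬ Disjoint T V → g T V = 0) (a c : ℕ) :
    ∑ T ∈ powersetCard a univ, ∑ V ∈ powersetCard c univ, g T V
      = ∑ S ∈ powersetCard (a + c) univ, ∑ T ∈ powersetCard a S, g T (S \ T) := by
  rw [← sum_product', ← sum_filter_of_ne (p := fun x => Disjoint x.1 x.2)
      (fun x _ hx => by_contra fun h => hx (hg x.1 x.2 h)), sum_sigma']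
  refine sum_nbij' (fun x => ⟨x.1 ∪ x.2, x.1⟩) (fun x => (x.2, x.1 \ x.2)) ?_ ?_ ?_ ?_ ?_
  · rintro ⟨T, V⟩ hx
    simp only [mem_filter, mem_product, mem_powersetCard] at hx
    obtain ⟨⟨⟨-, hT⟩, -, hV⟩, hTV⟩ := hx
    simp [card_union_of_disjoint hTV, hT, hV]
  · rintro ⟨S, T⟩ hx
    simp only [mem_sigma, mem_powersetCard] at hx
    obtain ⟨⟨-, hS⟩, hTS, hT⟩ := hx
    simp [card_sdiff_of_subset hTS, hS, hT, disjoint_sdiff]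
  · rintro ⟨T, V⟩ hx
    simp [union_sdiff_cancel_left (mem_filter.mp hx).2]
  · rintro ⟨S, T⟩ hx
    simp [union_sdiff_of_subset (mem_powersetCard.mp (mem_sigma.mp hx).2).1]
  · rintro ⟨T, V⟩ hx
    simp [union_sdiff_cancel_left (mem_filter.mp hx).2]

section Uop

variable {F A : Type*} [Field F] [AddCommGroup A] [Module F A] {n : ℕ}
  {d : Fin n → Module.End F A}

@[simp]
theorem Uop_zero (d : Fin n → Module.End F A) : Uop d 0 = 1 := by
  simp [Uop]

theorem Uop_eq_sum_subsetProd (hc : ∀ i j, Commute (d i) (d j)) (k : ℕ) :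
    Uop d k = ∑ S ∈ powersetCard k univ, subsetProd hc S := by
  refine sum_congr rfl fun S _ => ?_
  simp only [subsetProd, Finset.noncommProd]
  rw [← Multiset.noncommProd_coe]
  · congr
    rw [← Multiset.map_coe, sort_eq]
  · intro x hx y hy _
    obtain ⟨i, -, rfl⟩ := List.mem_map.mp hx
    obtain ⟨j, -, rfl⟩ := List.mem_map.mp hy
    exact hc i j

theorem Uop_mul_Uop (hc : ∀ i j, Commute (d i) (d j)) (hsq : ∀ j, d j * d j = 0) (a c : ℕ) :
    Uop d a * Uop d c = (a + c).choose a • Uop d (a + c) := by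
  simp_rw [Uop_eq_sum_subsetProd hc, sum_mul, mul_sum]
  rw [sum_powersetCard_sum_powersetCard_eq_sum_sdiff _
    (fun T V h => subsetProd_mul_subsetProd_of_not_disjoint hc hsq h), smul_sum]
  refine sum_congr rfl fun S hS => ?_
  have hsplit : ∀ T ∈ powersetCard a S, subsetProd hc T * subsetProd hc (S \ T) = subsetProd hc S :=
    fun T hT => by
      rw [← subsetProd_union hc disjoint_sdiff, union_sdiff_of_subset (mem_powersetCard.mp hT).1]
  rw [sum_congr rfl hsplit, sum_const, card_powersetCard, (mem_powersetCard.mp hS).2]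

end Uop

section Leibniz

variable {F L : Type*} [Field F] [LieRing L] [LieAlgebra F L]

theorem mul_ad_of_isDerivation {D : Module.End F L} (hD : ∀ x z, D ⁅x, z⁆ = ⁅D x, z⁆ + ⁅x, D z⁆)
    (x : L) : D * ad F L x = ad F L x * D + ad F L (D x) := by
  ext z
  simp [hD, add_comm]

variable {ι : Type*} [DecidableEq ι] {d : ι → Module.End F L}

theorem subsetProd_mul_ad (hc : ∀ i j, Commute (d i) (d j))
    (hder : ∀ j x z, d j ⁅x, z⁆ = ⁅d j x, z⁆ + ⁅x, d j z⁆) (y : L) (S : Finset ι) :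
    subsetProd hc S * ad F L y
      = ∑ T ∈ S.powerset, ad F L (subsetProd hc T y) * subsetProd hc (S \ T) := by
  induction S using Finset.induction_on with
  | empty => simp
  | @insert j S hj ih =>
    rw [subsetProd_insert hc hj, mul_assoc, ih, mul_sum, sum_powerset_insert hj, ← sum_add_distrib]
    refine sum_congr rfl fun T hT => ?_
    have hjT : j ∉ T := fun h => hj (mem_powerset.mp hT h)
    rw [insert_sdiff_of_notMem _ hjT, subsetProd_insert hc (fun h => hj (mem_sdiff.mp h).1),
      insert_sdiff_insert, sdiff_insert_of_notMem hj, subsetProd_insert hc hjT,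
      Module.End.mul_apply, ← mul_assoc, mul_ad_of_isDerivation (hder j), add_mul, mul_assoc]

theorem Uop_mul_ad {n : ℕ} {d : Fin n → Module.End F L} (hc : ∀ i j, Commute (d i) (d j))
    (hder : ∀ j x z, d j ⁅x, z⁆ = ⁅d j x, z⁆ + ⁅x, d j z⁆)
    (had_mul : ∀ j x, ad F L (d j x) * d j = 0) (m : ℕ) (y : L) :
    Uop d m * ad F L y = ∑ a ∈ range (m + 1), ad F L (Uop d a y) * Uop d (m - a) := by
  have hoverlap : ∀ T V : Finset (Fin n), ¬ Disjoint T V →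
      ad F L (subsetProd hc T y) * subsetProd hc V = 0 := by
    intro T V h
    obtain ⟨j, hjT, hjV⟩ := not_disjoint_iff.mp h
    rw [subsetProd_eq_mul_erase hc hjT, subsetProd_eq_mul_erase hc hjV, Module.End.mul_apply,
      ← mul_assoc, had_mul, zero_mul]
  calc Uop d m * ad F L y
      = ∑ S ∈ powersetCard m univ, ∑ a ∈ range (m + 1), ∑ T ∈ powersetCard a S,
          ad F L (subsetProd hc T y) * subsetProd hc (S \ T) := by
        rw [Uop_eq_sum_subsetProd hc, sum_mul]
        refine sum_congr rfl fun S hS => ?_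
        rw [subsetProd_mul_ad hc hder, sum_powerset, (mem_powersetCard.mp hS).2]
    _ = ∑ a ∈ range (m + 1), ad F L (Uop d a y) * Uop d (m - a) := by
        rw [sum_comm]
        refine sum_congr rfl fun a ha => ?_
        simp_rw [Uop_eq_sum_subsetProd hc, LinearMap.sum_apply, map_sum, sum_mul, mul_sum]
        rw [sum_powersetCard_sum_powersetCard_eq_sum_sdiff _ hoverlap,
          Nat.add_sub_cancel' (Nat.lt_succ_iff.mp (mem_range.mp ha))]

end Leibniz

section Sandwich

variable {F L : Type*} [Field F] [LieRing L] [LieAlgebra F L]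

theorem IsSandwich.ad_lie_mul_ad {a : L} (ha : IsSandwich F a) (x : L) :
    ad F L ⁅a, x⁆ * ad F L a = 0 := by
  ext z
  have h1 := LinearMap.congr_fun (ha.2 x) z
  have h2 := LinearMap.congr_fun ha.1 z
  simp only [Module.End.mul_apply, ad_apply, LinearMap.zero_apply] at h1 h2 ⊢
  rw [lie_lie, h1, h2, lie_zero, sub_zero]

variable {n : ℕ} {b : Fin n → L}

theorem Uop_mul_ad_of_isSandwich (hcomm : ∀ i j, Commute (ad F L (b i)) (ad F L (b j)))
    (hsand : ∀ i, IsSandwich F (b i)) (m : ℕ) (y : L) :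
    Uop (fun j => ad F L (b j)) m * ad F L y
      = ∑ a ∈ range (m + 1), ad F L (Uop (fun j => ad F L (b j)) a y)
          * Uop (fun j => ad F L (b j)) (m - a) :=
  Uop_mul_ad hcomm (fun j => ad_lie F (b j)) (fun j => (hsand j).ad_lie_mul_ad) m y

theorem Uop_two_mul_ad_mul_Uop_two (hcomm : ∀ i j, Commute (ad F L (b i)) (ad F L (b j)))
    (hsand : ∀ i, IsSandwich F (b i)) (hU : ∀ k, 3 ≤ k → Uop (fun j => ad F L (b j)) k = 0)
    (y : L) :
    Uop (fun j => ad F L (b j)) 2 * ad F L y * Uop (fun j => ad F L (b j)) 2 = 0 := by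
  have h4 := Uop_mul_ad_of_isSandwich hcomm hsand 4 y
  rw [Uop_mul_ad_of_isSandwich hcomm hsand, sum_mul]
  simpa [sum_range_succ, mul_assoc, Uop_mul_Uop hcomm (fun j => (hsand j).1), hU 3 le_rfl,
    hU 4 (by norm_num)] using h4.symm

theorem Uop_one_mul_ad_mul_Uop_two (hcomm : ∀ i j, Commute (ad F L (b i)) (ad F L (b j)))
    (hsand : ∀ i, IsSandwich F (b i)) (hU : ∀ k, 3 ≤ k → Uop (fun j => ad F L (b j)) k = 0)
    (y : L) :
    Uop (fun j => ad F L (b j)) 1 * ad F L y * Uop (fun j => ad F L (b j)) 2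
      = Uop (fun j => ad F L (b j)) 2 * ad F L y * Uop (fun j => ad F L (b j)) 1 := by
  have h3 := Uop_mul_ad_of_isSandwich hcomm hsand 3 y
  rw [Uop_mul_ad_of_isSandwich hcomm hsand, Uop_mul_ad_of_isSandwich hcomm hsand, sum_mul,
    sum_mul]
  simpa [sum_range_succ, mul_assoc, Uop_mul_Uop hcomm (fun j => (hsand j).1), hU 3 le_rfl,
    add_mul, mul_add, add_assoc] using h3.symm

end Sandwich

section OpChain

variable {F L : Type*} [Field F] [LieRing L] [LieAlgebra F L] {n : ℕ} (d : Fin n → Module.End F L)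

theorem opChain_succ' (y : ℕ → L) (i : ℕ → ℕ) (t : ℕ) :
    opChain d y i (t + 1)
      = opChain d (fun j => y (j + 1)) (fun j => i (j + 1)) t * ad F L (y 0) * Uop d (i 0) := by
  induction t with
  | zero => rfl
  | succ t ih => rw [opChain, ih, opChain]; simp only [mul_assoc]

theorem opChain_congr (y : ℕ → L) {i i' : ℕ → ℕ} {t : ℕ} (h : ∀ j ≤ t, i j = i' j) :
    opChain d y i t = opChain d y i' t := by
  induction t with
  | zero => simp only [opChain, h 0 le_rfl]
  | succ t ih => simp only [opChain, h (t + 1) le_rfl, ih fun j hj => h j (by omega)]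

theorem opChain_eq_zero_of_le {y : ℕ → L} {i : ℕ → ℕ} {t s : ℕ} (h : opChain d y i t = 0)
    (hts : t ≤ s) : opChain d y i s = 0 := by
  induction s, hts using Nat.le_induction with
  | base => exact h
  | succ s _ ih => rw [opChain, ih, mul_zero]

theorem opChain_eq_zero_of_shift {y : ℕ → L} {i : ℕ → ℕ} {p t s : ℕ}
    (h : opChain d (fun j => y (p + j)) (fun j => i (p + j)) t = 0) (hs : p + t ≤ s) :
    opChain d y i s = 0 := by
  induction p generalizing y i s with
  | zero =>
    simp only [zero_add] at h hs
    exact opChain_eq_zero_of_le d h hs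
  | succ p ih =>
    obtain ⟨s, rfl⟩ : ∃ s', s = s' + 1 := ⟨s - 1, by omega⟩
    simp only [Nat.add_right_comm p 1] at h
    rw [opChain_succ', ih h (by omega), zero_mul, zero_mul]

theorem opChain_eq_zero_of_three_le (hU : ∀ k, 3 ≤ k → Uop d k = 0) {y : ℕ → L} {i : ℕ → ℕ}
    {s j : ℕ} (hj : j ≤ s) (hij : 3 ≤ i j) : opChain d y i s = 0 :=
  opChain_eq_zero_of_shift d (p := j) (t := 0) (by simp [opChain, hU _ hij]) (by omega)

theorem opChain_eq_zero_of_two_ones_two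
    (h12 : ∀ z, Uop d 1 * ad F L z * Uop d 2 = Uop d 2 * ad F L z * Uop d 1)
    (h22 : ∀ z, Uop d 2 * ad F L z * Uop d 2 = 0) (y : ℕ → L) (t : ℕ) {i : ℕ → ℕ}
    (h0 : i 0 = 2) (ht : i (t + 1) = 2) (h1 : ∀ j, 0 < j → j < t + 1 → i j = 1) :
    opChain d y i (t + 1) = 0 := by
  induction t generalizing i with
  | zero => simp only [opChain, h0, ht, h22]
  | succ t ih =>
    -- Trade `U₂ ad U₁` for `U₁ ad U₂` at the right end, which shortens the window by one.
    have hi' : opChain d y (Function.update i (t + 1) 2) (t + 1) = 0 := by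
      refine ih ?_ (Function.update_self ..) fun j hj0 hjt => ?_
      all_goals rw [Function.update_of_ne (by omega)]
      exacts [h0, h1 j hj0 (by omega)]
    have hprefix : opChain d y i t = opChain d y (Function.update i (t + 1) 2) t :=
      opChain_congr d y fun j hj => (Function.update_of_ne (by omega) ..).symm
    calc opChain d y i (t + 1 + 1)
        = Uop d 2 * ad F L (y (t + 1)) * Uop d 1 * (ad F L (y t) * opChain d y i t) := by
          simp only [opChain, ht, h1 (t + 1) (by omega) (by omega), mul_assoc]
      _ = Uop d 1 * ad F L (y (t + 1)) * opChain d y (Function.update i (t + 1) 2) (t + 1) := by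
          rw [← h12, opChain, hprefix, Function.update_self]; simp only [mul_assoc]
      _ = 0 := by rw [hi', mul_zero]

theorem opChain_eq_zero_of_window
    (h12 : ∀ z, Uop d 1 * ad F L z * Uop d 2 = Uop d 2 * ad F L z * Uop d 1)
    (h22 : ∀ z, Uop d 2 * ad F L z * Uop d 2 = 0) {y : ℕ → L} {i : ℕ → ℕ} {s p q : ℕ}
    (hpq : p < q) (hqs : q ≤ s) (hp : i p = 2) (hq : i q = 2)
    (h1 : ∀ j, p < j → j < q → i j = 1) : opChain d y i s = 0 := by
  obtain ⟨t, rfl⟩ : ∃ t, q = p + (t + 1) := ⟨q - p - 1, by omega⟩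
  refine opChain_eq_zero_of_shift d (opChain_eq_zero_of_two_ones_two d h12 h22 _ t ?_ ?_ ?_) hqs
  · simpa using hp
  · simpa using hq
  · exact fun j hj0 hjt => h1 (p + j) (by omega) (by omega)

end OpChain

theorem sum_Ico_le_of_no_window {s : ℕ} {i : ℕ → ℕ} (hle : ∀ j ≤ s, i j ≤ 2)
    (hwin : ∀ p q, p < q → q ≤ s → i p = 2 → i q = 2 → ∃ j, p < j ∧ j < q ∧ i j ≠ 1)
    {a c : ℕ} (hac : a ≤ c) (hc : c ≤ s + 1) : ∑ j ∈ Ico a c, i j ≤ c - a + 1 := by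
  -- The excess of the sum over the length can only reach one right after a `2`
  -- followed by `1`s, where a further `2` is forbidden.
  suffices h : ∀ c, a ≤ c → c ≤ s + 1 → ∑ j ∈ Ico a c, i j ≤ c - a ∨
      (∑ j ∈ Ico a c, i j ≤ c - a + 1 ∧
        ∃ p, a ≤ p ∧ p < c ∧ i p = 2 ∧ ∀ j, p < j → j < c → i j = 1) by
    rcases h c hac hc with h | h <;> omega
  intro c hac
  induction c, hac using Nat.le_induction with
  | base => simp
  | succ c hac ih =>
    intro hc
    rw [sum_Ico_succ_top hac]
    have hic := hle c (by omega)
    rcases ih (by omega) with hS | ⟨hS, p, hap, hpc, hp, hp1⟩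
    · by_cases h2 : i c = 2
      · exact Or.inr ⟨by omega, c, hac, by omega, h2, fun j _ _ => by omega⟩
      · exact Or.inl (by omega)
    · obtain hc0 | hc1 | hc2 : i c = 0 ∨ i c = 1 ∨ i c = 2 := by omega
      · exact Or.inl (by omega)
      · refine Or.inr ⟨by omega, p, hap, by omega, hp, fun j hpj hjc => ?_⟩
        rcases Nat.lt_succ_iff_lt_or_eq.mp hjc with hjc | rfl
        exacts [hp1 j hpj hjc, hc1]
      · obtain ⟨j, hpj, hjc, hj⟩ := hwin p c hpc (by omega) hp hc2
        exact absurd (hp1 j hpj hjc) hj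

section Chain

variable {F L : Type*} [Field F] [LieRing L] [LieAlgebra F L] {n : ℕ} (d : Fin n → Module.End F L)

theorem sum_Ico_le_of_opChain_ne_zero (hU : ∀ k, 3 ≤ k → Uop d k = 0)
    (h12 : ∀ z, Uop d 1 * ad F L z * Uop d 2 = Uop d 2 * ad F L z * Uop d 1)
    (h22 : ∀ z, Uop d 2 * ad F L z * Uop d 2 = 0) {y : ℕ → L} {i : ℕ → ℕ} {s : ℕ}
    (hne : opChain d y i s ≠ 0) {a c : ℕ} (hac : a ≤ c) (hc : c ≤ s + 1) :
    ∑ j ∈ Ico a c, i j ≤ c - a + 1 := by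
  refine sum_Ico_le_of_no_window (fun j hj => ?_) (fun p q hpq hqs hp hq => ?_) hac hc
  · by_contra! h
    exact hne (opChain_eq_zero_of_three_le d hU hj h)
  · by_contra! h
    exact hne (opChain_eq_zero_of_window d h12 h22 hpq hqs hp hq h)

theorem chainEl_eq_smul_opChain (y : ℕ → L) (i : ℕ → ℕ) (m : ℕ) :
    chainEl d y i m = ((-1 : ℤ) ^ m) • opChain d (fun j => y (j + 1)) i m (y 0) := by
  induction m with
  | zero => simp [chainEl, opChain]
  | succ m ih =>
    rw [chainEl, ih, smul_lie, opChain, ← lie_skew _ (y (m + 1))]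
    simp [pow_succ, -lie_skew]

end Chain

/-- Vanishing properties of expressions built from `U_k = U_k(ad b_1, …, ad b_n)` for pairwise
ad-commuting sandwiches `b_i` when `U_k = 0` for all `k ≥ 3`. -/
theorem Uop_sandwich_vanishing
    {F : Type*} {L : Type*} [Field F] [LieRing L] [LieAlgebra F L]
    {n : ℕ} (b : Fin n → L)
    (hcomm : ∀ i j : Fin n, Commute (LieAlgebra.ad F L (b i)) (LieAlgebra.ad F L (b j)))
    (hsand : ∀ i : Fin n, IsSandwich F (b i))
    (hU : ∀ k : ℕ, 3 ≤ k → Uop (fun j => LieAlgebra.ad F L (b j)) k = 0) :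
    (∀ s : ℕ, 1 ≤ s → ∀ (y : ℕ → L) (i : ℕ → ℕ),
        s + 2 ≤ ∑ j ∈ Finset.range s, i j →
        chainEl (fun j => LieAlgebra.ad F L (b j)) y i (s - 1) = 0) ∧
    (∀ (s : ℕ) (y : ℕ → L) (i : ℕ → ℕ),
        s + 3 ≤ ∑ j ∈ Finset.range (s + 1), i j →
        opChain (fun j => LieAlgebra.ad F L (b j)) y i s = 0) ∧
    (∀ (s : ℕ) (y : ℕ → L) (i : ℕ → ℕ),
        s + 2 ≤ ∑ j ∈ Finset.range (s + 1), i j →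
        ∀ k : ℕ, 1 ≤ k → k ≤ s - 2 → i k = 0 → i (k + 1) = 0 →
        opChain (fun j => LieAlgebra.ad F L (b j)) y i s = 0) := by
  have h12 := Uop_one_mul_ad_mul_Uop_two hcomm hsand hU
  have h22 := Uop_two_mul_ad_mul_Uop_two hcomm hsand hU
  have part2 : ∀ s y i, s + 3 ≤ ∑ j ∈ range (s + 1), i j →
      opChain (fun j => ad F L (b j)) y i s = 0 := by
    intro s y i hsum
    by_contra hne
    have := sum_Ico_le_of_opChain_ne_zero _ hU h12 h22 hne (Nat.zero_le _) le_rfl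
    rw [← range_eq_Ico] at this
    omega
  refine ⟨fun s hs y i hsum => ?_, part2, fun s y i hsum k hk1 hks hk hk' => ?_⟩
  · obtain ⟨s, rfl⟩ : ∃ s', s = s' + 1 := ⟨s - 1, by omega⟩
    rw [Nat.add_sub_cancel, chainEl_eq_smul_opChain, part2 s _ i hsum, LinearMap.zero_apply,
      smul_zero]
  · by_contra hne
    have hsplit : ∑ j ∈ range (s + 1), i j
        = ∑ j ∈ Ico 0 k, i j + i k + i (k + 1) + ∑ j ∈ Ico (k + 2) (s + 1), i j := by
      rw [range_eq_Ico, ← sum_Ico_consecutive _ (Nat.zero_le (k + 2)) (by omega : k + 2 ≤ s + 1),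
        sum_Ico_succ_top (by omega), sum_Ico_succ_top (Nat.zero_le k)]
    have := sum_Ico_le_of_opChain_ne_zero _ hU h12 h22 hne (Nat.zero_le k) (by omega)
    have := sum_Ico_le_of_opChain_ne_zero _ hU h12 h22 hne (by omega : k + 2 ≤ s + 1) le_rfl
    omega
end

section
/- Let L be a Lie algebra over a field F, let n ≥ 3, and suppose there are scalars α_σ ∈ F indexed by the permutations σ of {1, …, n−1}, with α_id = 1, such that Σ_σ α_σ [x_0, x_{σ(1)}, …, x_{σ(n−1)}] = 0 (left-normed brackets) for all x_0, …, x_{n−1} ∈ L. Define f_1(a, b_2, …, b_{n−1}) = Σ_{σ : σ(1)=1} α_σ [a, b_{σ(2)}, …, b_{σ(n−1)}]. Then for arbitrary elements a, b_2, …, b_{n−1}, c ∈ L, the bracket ⁅f_1(a, b_2, …, b_{n−1}), c⁆ lies in the F-linear span of the elements [a, b_{i_2}, …, b_{i_{k−1}}, ⁅b_{i_k}, c⁆, b_{i_{k+1}}, …, b_{i_{n−1}}], where (i_2, i_3, …, i_{n−1}) ranges over the permutations of (2, …, n−1) and 2 ≤ k ≤ n−1. -/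
/-!
Put `x₀ = c` and `(a, b₂, …, b_{n-1})` into the identity and work modulo the span `S` of the
statement. A term with `σ(1) = 1` is `[c, a, b_{σ(2)}, …] = -[a, c, b_{σ(2)}, …]`, and pushing `c`
to the end past each `b` costs a generator of `S` (Jacobi), so it is `-⁅[a, b_{σ(2)}, …], c⁆`
modulo `S`. In every other term `a` stands after some `b`, and
`[c, b, u₁, …, a, v₁, …] = [a, [b, c, u₁, …], v₁, …]`; expanding the inner commutator by Jacobi
writes it as a combination of generators of `S`. Hence the identity gives `⁅f₁, c⁆ ∈ S`.
-/

/-- Left-normed Lie bracket: `leftNormed x [y₁, …, yₖ] = ⁅…⁅⁅x, y₁⁆, y₂⁆, …, yₖ⁆`. -/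
def leftNormed {L : Type*} [LieRing L] (x : L) (l : List L) : L :=
  l.foldl (fun u v => ⁅u, v⁆) x

open List

theorem List.Perm.exists_ofFn_comp_eq {α : Type*} {m : ℕ} {g : Fin m → α} {l : List α}
    (h : l ~ ofFn g) : ∃ σ : Equiv.Perm (Fin m), ofFn (g ∘ σ) = l := by
  induction m generalizing l with
  | zero => exact ⟨1, by simpa using h.symm⟩
  | succ m ih =>
    cases l with
    | nil => simpa using h.length_eq
    | cons hd t =>
      obtain ⟨j, rfl⟩ := mem_ofFn.mp (h.subset mem_cons_self)
      have ht : t ~ ofFn fun i => g (Equiv.swap 0 j i.succ) := by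
        have := h.trans ((Equiv.swap 0 j).ofFn_comp_perm g).symm
        rw [ofFn_succ] at this
        simpa using this
      obtain ⟨σ, rfl⟩ := ih ht
      refine ⟨Equiv.swap 0 j * Equiv.Perm.decomposeFin.symm (0, σ), ?_⟩
      simp [ofFn_succ, Equiv.Perm.decomposeFin_symm_apply_succ, Function.comp_def]

theorem List.ofFn_update {α : Type*} {m : ℕ} (f : Fin m → α) (k : Fin m) (v : α) :
    ofFn (Function.update f k v) = (ofFn f).set k v := by
  apply ext_getElem <;> simp [getElem_set, Function.update_apply, Fin.ext_iff, eq_comm]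

theorem List.ofFn_update_zero {α : Type*} {m : ℕ} (f : Fin (m + 1) → α) (a : α) :
    ofFn (Function.update f 0 a) = a :: ofFn fun i => f i.succ := by
  simp [ofFn_succ, Fin.succ_ne_zero]

lemma Finset.sum_filter_mem_of_sum_eq_zero {ι R M : Type*} [Semiring R] [AddCommMonoid M]
    [Module R M] {P : Submodule R M} {s : Finset ι} {p : ι → Prop} [DecidablePred p]
    {f g : ι → M} (hg : ∑ i ∈ s, g i = 0)
    (hpos : ∀ i, p i → f i + g i ∈ P) (hneg : ∀ i, ¬ p i → g i ∈ P) :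
    ∑ i ∈ s.filter p, f i ∈ P := by
  have hsum : ∑ i ∈ s.filter p, f i
      = ∑ i ∈ s.filter p, (f i + g i) + ∑ i ∈ s.filter (fun i => ¬ p i), g i := by
    rw [Finset.sum_add_distrib, add_assoc, Finset.sum_filter_add_sum_filter_not, hg, add_zero]
  rw [hsum]
  exact add_mem (P.sum_mem fun i hi => hpos i (Finset.mem_filter.mp hi).2)
    (P.sum_mem fun i hi => hneg i (Finset.mem_filter.mp hi).2)

section LeftNormed

variable {L : Type*} [LieRing L]

@[simp] lemma leftNormed_cons (x y : L) (l : List L) :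
    leftNormed x (y :: l) = leftNormed ⁅x, y⁆ l := rfl

lemma leftNormed_append (x : L) (l₁ l₂ : List L) :
    leftNormed x (l₁ ++ l₂) = leftNormed (leftNormed x l₁) l₂ :=
  foldl_append

lemma leftNormed_concat (x y : L) (l : List L) :
    leftNormed x (l ++ [y]) = ⁅leftNormed x l, y⁆ := by
  rw [leftNormed_append]; rfl

lemma leftNormed_neg (x : L) (l : List L) : leftNormed (-x) l = -leftNormed x l := by
  induction l generalizing x with
  | nil => rfl
  | cons y l ih => simp only [leftNormed_cons, neg_lie, ih]

lemma leftNormed_sub (x y : L) (l : List L) :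
    leftNormed (x - y) l = leftNormed x l - leftNormed y l := by
  induction l generalizing x y with
  | nil => rfl
  | cons z l ih => simp [sub_lie, ih]

lemma leftNormed_append_lie_cons (a u d : L) (l₁ l₂ : List L) :
    leftNormed a (l₁ ++ ⁅u, d⁆ :: l₂)
      = leftNormed a (l₁ ++ u :: d :: l₂) - leftNormed a (l₁ ++ d :: u :: l₂) := by
  simp only [leftNormed_append, leftNormed_cons, ← leftNormed_sub]
  congr 1
  rw [leibniz_lie, ← lie_skew u]
  abel

/-- The span of the statement, with the permutations `τ` fixing `0` encoded as the rearrangements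
`l₁ ++ b :: l₂` of `B = [b₂, …, b_{n-1}]` and `b` the entry that is bracketed with `c`. -/
def lieSubstSpan (F : Type*) [CommRing F] [LieAlgebra F L] (a c : L) (B : List L) :
    Submodule F L :=
  Submodule.span F {z | ∃ l₁ b l₂, l₁ ++ b :: l₂ ~ B ∧ z = leftNormed a (l₁ ++ ⁅b, c⁆ :: l₂)}

section Span

variable {F : Type*} [CommRing F] [LieAlgebra F L]

lemma leftNormed_append_lie_cons_mem_lieSubstSpan {a b c : L} {l₁ l₂ B : List L}
    (h : l₁ ++ b :: l₂ ~ B) : leftNormed a (l₁ ++ ⁅b, c⁆ :: l₂) ∈ lieSubstSpan F a c B :=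
  Submodule.subset_span ⟨l₁, b, l₂, h, rfl⟩

lemma leftNormed_append_leftNormed_cons_mem_lieSubstSpan {a b c : L} {l₁ s l₂ B : List L}
    (h : l₁ ++ b :: (s ++ l₂) ~ B) :
    leftNormed a (l₁ ++ leftNormed ⁅b, c⁆ s :: l₂) ∈ lieSubstSpan F a c B := by
  induction s using List.reverseRecOn generalizing l₁ l₂ with
  | nil => exact leftNormed_append_lie_cons_mem_lieSubstSpan h
  | append_singleton s d ih =>
    rw [leftNormed_concat, leftNormed_append_lie_cons]
    have hd : l₁ ++ [d] ++ b :: (s ++ l₂) ~ B :=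
      .trans (by simpa using (perm_middle (l₁ := b :: s) (l₂ := l₂)).symm.append_left l₁)
        (by simpa using h)
    exact sub_mem (ih (by simpa using h)) (by simpa using ih hd)

lemma leftNormed_append_cons_sub_lie_mem_lieSubstSpan {a c : L} {l₁ l₂ B : List L}
    (h : l₁ ++ l₂ ~ B) :
    leftNormed a (l₁ ++ c :: l₂) - ⁅leftNormed a (l₁ ++ l₂), c⁆ ∈ lieSubstSpan F a c B := by
  induction l₂ generalizing l₁ with
  | nil => simp [leftNormed_concat]
  | cons d l₂ ih =>
    have key : leftNormed a (l₁ ++ c :: d :: l₂) - ⁅leftNormed a (l₁ ++ d :: l₂), c⁆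
        = (leftNormed a ((l₁ ++ [d]) ++ c :: l₂) - ⁅leftNormed a ((l₁ ++ [d]) ++ l₂), c⁆)
          - leftNormed a (l₁ ++ ⁅d, c⁆ :: l₂) := by
      rw [leftNormed_append_lie_cons]
      simp only [append_assoc, singleton_append]
      abel
    rw [key]
    exact sub_mem (ih (by simpa using h)) (leftNormed_append_lie_cons_mem_lieSubstSpan h)

lemma lie_leftNormed_add_leftNormed_cons_mem_lieSubstSpan {a c : L} {l B : List L} (h : l ~ B) :
    ⁅leftNormed a l, c⁆ + leftNormed c (a :: l) ∈ lieSubstSpan F a c B := by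
  have hca : leftNormed c (a :: l) = -leftNormed a (c :: l) := by
    rw [leftNormed_cons, leftNormed_cons, ← lie_skew, leftNormed_neg]
  have hmem := neg_mem
    (leftNormed_append_cons_sub_lie_mem_lieSubstSpan (F := F) (a := a) (c := c) (l₁ := []) h)
  rwa [nil_append, nil_append, neg_sub, sub_eq_add_neg, ← hca] at hmem

lemma leftNormed_cons_append_cons_mem_lieSubstSpan {a b c : L} {l₁ l₂ B : List L}
    (h : b :: (l₁ ++ l₂) ~ B) :
    leftNormed c (b :: l₁ ++ a :: l₂) ∈ lieSubstSpan F a c B := by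
  have key : leftNormed c (b :: l₁ ++ a :: l₂) = leftNormed a (leftNormed ⁅b, c⁆ l₁ :: l₂) := by
    rw [cons_append, leftNormed_cons, leftNormed_append, leftNormed_cons, leftNormed_cons]
    congr 1
    rw [← lie_skew c b, leftNormed_neg, neg_lie, lie_skew]
  rw [key]
  exact leftNormed_append_leftNormed_cons_mem_lieSubstSpan (l₁ := []) h

lemma leftNormed_mem_lieSubstSpan_of_getElem_eq {a c : L} {l B : List L} {j : ℕ}
    (hj : j < l.length) (hj0 : j ≠ 0) (ha : l[j] = a) (hB : l.eraseIdx j ~ B) :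
    leftNormed c l ∈ lieSubstSpan F a c B := by
  obtain ⟨b, l₁, hb⟩ : ∃ b l₁, l.take j = b :: l₁ :=
    exists_cons_of_ne_nil (ne_nil_of_length_pos (by simp only [length_take]; omega))
  have hl : l = b :: l₁ ++ a :: l.drop (j + 1) := by
    rw [← hb, ← ha, ← drop_eq_getElem_cons, take_append_drop]
  rw [eraseIdx_eq_take_drop_succ, hb] at hB
  rw [hl]
  exact leftNormed_cons_append_cons_mem_lieSubstSpan hB

variable {m : ℕ} (a c : L) (y : Fin (m + 1) → L) (σ : Equiv.Perm (Fin (m + 1)))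

lemma lie_leftNormed_tail_add_mem_lieSubstSpan (hσ : σ 0 = 0) :
    ⁅leftNormed a (ofFn fun i => y (σ i)).tail, c⁆
      + leftNormed c (ofFn fun i => Function.update y 0 a (σ i))
      ∈ lieSubstSpan F a c (ofFn fun i => y i.succ) := by
  have hne : ∀ i : Fin m, σ i.succ ≠ 0 := fun i => hσ ▸ σ.injective.ne (Fin.succ_ne_zero i)
  have hz : (ofFn fun i => Function.update y 0 a (σ i)) = a :: (ofFn fun i => y (σ i)).tail := by
    simp [ofFn_succ, hσ, hne]
  have ht : (ofFn fun i => y (σ i)).tail ~ ofFn fun i => y i.succ :=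
    (perm_cons (y 0)).mp (by simpa [ofFn_succ, hσ] using σ.ofFn_comp_perm y)
  rw [hz]
  exact lie_leftNormed_add_leftNormed_cons_mem_lieSubstSpan ht

lemma leftNormed_ofFn_update_mem_lieSubstSpan (hσ : σ 0 ≠ 0) :
    leftNormed c (ofFn fun i => Function.update y 0 a (σ i))
      ∈ lieSubstSpan F a c (ofFn fun i => y i.succ) := by
  set l := ofFn fun i => Function.update y 0 a (σ i)
  have hj : (σ.symm 0 : ℕ) < l.length := by simp only [l, length_ofFn, Fin.is_lt]
  have ha : l[(σ.symm 0 : ℕ)] = a := by simp only [l, List.getElem_ofFn]; simp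
  refine leftNormed_mem_lieSubstSpan_of_getElem_eq hj ?_ ha ?_
  · exact Fin.val_ne_zero_iff.mpr fun h => hσ (by simpa [h] using σ.apply_symm_apply 0)
  · refine (perm_cons a).mp ?_
    have hl := (getElem_cons_eraseIdx_perm hj).trans (σ.ofFn_comp_perm (Function.update y 0 a))
    rwa [ha, ofFn_update_zero] at hl

end Span

lemma lieSubstSpan_le_span_ofFn_tail (F : Type*) [CommRing F] [LieAlgebra F L] {m : ℕ}
    (a c : L) (y : Fin (m + 2) → L) :
    lieSubstSpan F a c (ofFn fun i => y i.succ) ≤ Submodule.span F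
      {z | ∃ τ : Equiv.Perm (Fin (m + 2)), τ 0 = 0 ∧ ∃ k : Fin (m + 2), k ≠ 0 ∧
        z = leftNormed a (ofFn fun i => if i = k then ⁅y (τ i), c⁆ else y (τ i)).tail} := by
  refine Submodule.span_mono ?_
  rintro _ ⟨l₁, b, l₂, h, rfl⟩
  obtain ⟨σ, hσ⟩ := h.exists_ofFn_comp_eq
  have hk : l₁.length < m + 1 := by
    have := congrArg length hσ
    simp only [length_ofFn, length_append, length_cons] at this
    omega
  set k : Fin (m + 1) := ⟨l₁.length, hk⟩
  have hb : y (σ k).succ = b := by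
    have := List.getElem_of_eq hσ (i := l₁.length) (by simp; omega)
    simpa only [List.getElem_ofFn, getElem_append_right le_rfl, Nat.sub_self, getElem_cons_zero,
      Function.comp_apply] using this
  refine ⟨Equiv.Perm.decomposeFin.symm (0, σ), by simp, k.succ, Fin.succ_ne_zero k, ?_⟩
  have hupd : (fun i : Fin (m + 1) => if i.succ = k.succ
      then ⁅y (Equiv.Perm.decomposeFin.symm (0, σ) i.succ), c⁆
      else y (Equiv.Perm.decomposeFin.symm (0, σ) i.succ))
        = Function.update ((fun i => y i.succ) ∘ σ) k ⁅b, c⁆ := by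
    funext i
    by_cases hi : i = k <;> simp [Equiv.Perm.decomposeFin_symm_apply_succ, hi, hb]
  rw [ofFn_succ, tail_cons, hupd, ofFn_update, hσ]
  simp [k]

end LeftNormed

/-- Lemma 27: if `L` satisfies a multilinear identity of degree `n` with coefficient `1` at
the identity permutation, and `f₁` is the partial sum over permutations fixing the first
variable, then `⁅f₁(a, b₂, …, b_{n-1}), c⁆` lies in the span of the left-normed commutators
`[a, b_{i₂}, …, ⁅b_{i_k}, c⁆, …, b_{i_{n-1}}]`. -/
theorem bracket_f1_mem_span
    {F : Type*} {L : Type*} [Field F] [LieRing L] [LieAlgebra F L]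
    (n : ℕ) (hn : 3 ≤ n) (α : Equiv.Perm (Fin (n - 1)) → F)
    (hid : ∀ (x0 : L) (x : Fin (n - 1) → L),
      ∑ σ : Equiv.Perm (Fin (n - 1)),
        α σ • leftNormed x0 (List.ofFn fun i => x (σ i)) = 0)
    (a : L) (x : Fin (n - 1) → L) (c : L) :
    ⁅∑ σ ∈ Finset.univ.filter
        (fun σ : Equiv.Perm (Fin (n - 1)) => σ ⟨0, by omega⟩ = ⟨0, by omega⟩),
      α σ • leftNormed a (List.ofFn fun i => x (σ i)).tail, c⁆ ∈
      Submodule.span F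
        { z : L | ∃ τ : Equiv.Perm (Fin (n - 1)), τ ⟨0, by omega⟩ = ⟨0, by omega⟩ ∧
          ∃ k : Fin (n - 1), k ≠ ⟨0, by omega⟩ ∧
            z = leftNormed a
              (List.ofFn fun i => if i = k then ⁅x (τ i), c⁆ else x (τ i)).tail } := by
  obtain ⟨m, rfl⟩ : ∃ m, n = m + 3 := ⟨n - 3, by omega⟩
  have hspan := lieSubstSpan_le_span_ofFn_tail F a c x
  rw [sum_lie]
  simp only [smul_lie]
  refine Finset.sum_filter_mem_of_sum_eq_zero (hid c (Function.update x ⟨0, by omega⟩ a)) ?_ ?_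
  · intro σ hσ
    rw [← smul_add]
    exact Submodule.smul_mem _ _ (hspan (lie_leftNormed_tail_add_mem_lieSubstSpan a c x σ hσ))
  · intro σ hσ
    exact Submodule.smul_mem _ _ (hspan (leftNormed_ofFn_update_mem_lieSubstSpan a c x σ hσ))
end
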